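/- Let V_H ⊆ Ū_H, let v₁ be a word over V_H ∪ {t, t⁻¹} in HNN reduced form, and let v_k be a word over Ū_H ∪ {t, t⁻¹} in HNN reduced form such that v₁ ≿ v_k. Then there exists a word v_k′ over V_H ∪ {t, t⁻¹} such that v_k ∼ v_k′. -/

import Mathlib

/-- `S` is a free basis of the group `G`: the induced map from the free group
on `S` is an isomorphism. -/
def IsFreeBasis {G : Type*} [Group G] (S : Set G) : Prop :=
  Function.Bijective ⇑(FreeGroup.lift (Subtype.val : S → G))

/-- Letters of words over `Ū_H ∪ {t, t⁻¹}`: an element of the free group `H`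
(intended to lie in `Ū_H`), the stable letter `t`, or its inverse. -/
inductive HLetter (X : Type*) where
  | gen : FreeGroup X → HLetter X
  | t : HLetter X
  | tinv : HLetter X

namespace HnnPaper

variable {X : Type*}

/-- A word `w` is a word over `S ∪ {t, t⁻¹}` if all its group letters lie in `S`. -/
def WordOver (S : Set (FreeGroup X)) (w : List (HLetter X)) : Prop :=
  ∀ l ∈ w, ∀ u : FreeGroup X, l = HLetter.gen u → u ∈ S

/-- A word consisting only of group letters (no `t`, `t⁻¹`). -/
def IsGenOnly (w : List (HLetter X)) : Prop :=
  ∀ l ∈ w, ∃ u : FreeGroup X, l = HLetter.gen u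

/-- The element of `H` represented by a `t`-free word (treats `t`-letters as `1`). -/
def evalH (w : List (HLetter X)) : FreeGroup X :=
  (w.map fun l => match l with
    | HLetter.gen u => u
    | _ => 1).prod

/-- `w` is in HNN reduced form: it has no subword `t⁻¹ w_i t` with `w_i` a `t`-free
word representing an element of `A = ⟨U_A⟩`, and no subword `t w_i t⁻¹` with `w_i`
a `t`-free word representing an element of `B = ⟨U_B⟩`. -/
def HNNReducedWord (UA UB : Set (FreeGroup X)) (w : List (HLetter X)) : Prop :=
  (∀ p mid s, w = p ++ [HLetter.tinv] ++ mid ++ [HLetter.t] ++ s →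
      IsGenOnly mid → evalH mid ∉ Subgroup.closure UA) ∧
  (∀ p mid s, w = p ++ [HLetter.t] ++ mid ++ [HLetter.tinv] ++ s →
      IsGenOnly mid → evalH mid ∉ Subgroup.closure UB)

variable {UA UB : Set (FreeGroup X)}

/-- The element of the HNN extension `H* = H ∗_{t,φ:A→B}` represented by a word. -/
def evalStar (φ : ↥(Subgroup.closure UA) ≃* ↥(Subgroup.closure UB))
    (w : List (HLetter X)) :
    HNNExtension (FreeGroup X) (Subgroup.closure UA) (Subgroup.closure UB) φ :=
  (w.map fun l => match l with
    | HLetter.gen u => HNNExtension.of u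
    | HLetter.t => HNNExtension.t
    | HLetter.tinv => HNNExtension.t⁻¹).prod

/-- Elementary addition: insertion of a pair `u u⁻¹` with `u ∈ Ū_H`. -/
def ElemAdd (UH : Set (FreeGroup X)) (w w' : List (HLetter X)) : Prop :=
  ∃ (p s : List (HLetter X)) (u : FreeGroup X), u ∈ UH ∪ UH⁻¹ ∧ w = p ++ s ∧
    w' = p ++ [HLetter.gen u, HLetter.gen u⁻¹] ++ s

/-- Elementary cancellation: deletion of a pair `u u⁻¹` with `u ∈ Ū_H`. -/
def ElemDel (UH : Set (FreeGroup X)) (w w' : List (HLetter X)) : Prop :=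
  ElemAdd UH w' w

/-- Elementary semicommutation: replacement of `u_a t` by `t u_b`, or of `t⁻¹ u_a`
by `u_b t⁻¹` (or conversely in either case), where `u_a ∈ Ū_A`, `u_b ∈ Ū_B` and
`φ(u_a) = u_b`. -/
def ElemSemi (φ : ↥(Subgroup.closure UA) ≃* ↥(Subgroup.closure UB))
    (w w' : List (HLetter X)) : Prop :=
  ∃ (p s : List (HLetter X)) (a : ↥(Subgroup.closure UA)), (a : FreeGroup X) ∈ UA ∪ UA⁻¹ ∧
    ((w = p ++ [HLetter.gen ↑a, HLetter.t] ++ s ∧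
      w' = p ++ [HLetter.t, HLetter.gen ↑(φ a)] ++ s) ∨
     (w = p ++ [HLetter.t, HLetter.gen ↑(φ a)] ++ s ∧
      w' = p ++ [HLetter.gen ↑a, HLetter.t] ++ s) ∨
     (w = p ++ [HLetter.tinv, HLetter.gen ↑a] ++ s ∧
      w' = p ++ [HLetter.gen ↑(φ a), HLetter.tinv] ++ s) ∨
     (w = p ++ [HLetter.gen ↑(φ a), HLetter.tinv] ++ s ∧
      w' = p ++ [HLetter.tinv, HLetter.gen ↑a] ++ s))

/-- An elementary operation: an elementary addition, cancellation or semicommutation. -/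
def ElemOp (UH : Set (FreeGroup X)) (φ : ↥(Subgroup.closure UA) ≃* ↥(Subgroup.closure UB))
    (w w' : List (HLetter X)) : Prop :=
  ElemAdd UH w w' ∨ ElemDel UH w w' ∨ ElemSemi φ w w'

/-- `w ∼ w'`: a finite sequence of elementary semicommutations turns `w` into `w'`. -/
def Sim (φ : ↥(Subgroup.closure UA) ≃* ↥(Subgroup.closure UB)) :
    List (HLetter X) → List (HLetter X) → Prop :=
  Relation.ReflTransGen (ElemSemi φ)

/-- The word `t^n` (a run of `t`'s or of `t⁻¹`'s). -/
def tPow (n : ℤ) : List (HLetter X) :=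
  if 0 ≤ n then List.replicate n.toNat HLetter.t
  else List.replicate (-n).toNat HLetter.tinv

/-- The word `t^{n₀} u₁ t^{n₁} ⋯ u_k t^{n_k}` determined by `n₀` and the list
`[(u₁,n₁),…,(u_k,n_k)]`. -/
def blockWord (n0 : ℤ) (l : List (FreeGroup X × ℤ)) : List (HLetter X) :=
  tPow n0 ++ l.flatMap (fun p => HLetter.gen p.1 :: tPow p.2)

/-- `w →_m v`: `w ≡ t^{n₀} u₁ t^{n₁} ⋯ u_k t^{n_k}` with `u_{m+1} ≡ u_m⁻¹` and
`n_m = 0`, and `v` is obtained from `w` by the elementary cancellation of the pair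
`u_m u_{m+1}` (so `t^{n_{m-1}}` becomes `t^{n_{m-1}+n_{m+1}}`). -/
def CancelAt (m : ℕ) (w v : List (HLetter X)) : Prop :=
  ∃ (n0 : ℤ) (pre post : List (FreeGroup X × ℤ)) (u : FreeGroup X) (n' : ℤ),
    pre.length + 1 = m ∧
    w = blockWord n0 (pre ++ [(u, 0), (u⁻¹, n')] ++ post) ∧
    ((pre = [] ∧ v = blockWord (n0 + n') post) ∨
     (∃ pre' u' nl, pre = pre' ++ [(u', nl)] ∧
        v = blockWord n0 (pre' ++ [(u', nl + n')] ++ post)))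

/-- `w ⇝_m v`: there are HNN reduced words `w′, v′` with `w ∼ w′ →_m v′ ∼ v`. -/
def RsaAt (φ : ↥(Subgroup.closure UA) ≃* ↥(Subgroup.closure UB)) (m : ℕ)
    (w v : List (HLetter X)) : Prop :=
  ∃ w' v', HNNReducedWord UA UB w' ∧ HNNReducedWord UA UB v' ∧
    Sim φ w w' ∧ CancelAt m w' v' ∧ Sim φ v' v

/-- `w ⇝ v`: `w ⇝_m v` for some `m`. -/
def Rsa (φ : ↥(Subgroup.closure UA) ≃* ↥(Subgroup.closure UB))
    (w v : List (HLetter X)) : Prop :=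
  ∃ m, RsaAt φ m w v

/-- `w ≿ v`: either `w ∼ v` or there is a sequence `w ≡ w₀ ⇝ w₁ ⇝ ⋯ ⇝ w_k ≡ v`
with `k ≥ 1`. -/
def Succsim (φ : ↥(Subgroup.closure UA) ≃* ↥(Subgroup.closure UB))
    (w v : List (HLetter X)) : Prop :=
  Sim φ w v ∨ Relation.TransGen (Rsa φ) w v

/-- `v` is in most reduced form: it is HNN reduced and no `v ⇝ v'` is possible. -/
def MostReduced (φ : ↥(Subgroup.closure UA) ≃* ↥(Subgroup.closure UB))
    (v : List (HLetter X)) : Prop :=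
  HNNReducedWord UA UB v ∧ ∀ v', ¬ Rsa φ v v'

/-- `MRF(w)`: the set of words `v` with `v ≾ w` that are in most reduced form. -/
def MRF (φ : ↥(Subgroup.closure UA) ≃* ↥(Subgroup.closure UB))
    (w : List (HLetter X)) : Set (List (HLetter X)) :=
  {v | Succsim φ w v ∧ MostReduced φ v}

/-- The partial bijection `Ū_A → Ū_B` induced by `φ`, as a relation on `H`. -/
def PhiRel (φ : ↥(Subgroup.closure UA) ≃* ↥(Subgroup.closure UB))
    (u v : FreeGroup X) : Prop :=
  ∃ a : ↥(Subgroup.closure UA), (a : FreeGroup X) ∈ UA ∪ UA⁻¹ ∧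
    (a : FreeGroup X) = u ∧ ((φ a : ↥(Subgroup.closure UB)) : FreeGroup X) = v

/-- `v = φ^n(u)` for `n ∈ ℕ`. -/
def PhiPowN (φ : ↥(Subgroup.closure UA) ≃* ↥(Subgroup.closure UB)) :
    ℕ → FreeGroup X → FreeGroup X → Prop
  | 0 => Eq
  | (n + 1) => fun u v => ∃ w, PhiPowN φ n u w ∧ PhiRel φ w v

/-- `v = φ^z(u)` for `z ∈ ℤ`. -/
def PhiZPow (φ : ↥(Subgroup.closure UA) ≃* ↥(Subgroup.closure UB)) (z : ℤ)
    (u v : FreeGroup X) : Prop :=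
  if 0 ≤ z then PhiPowN φ z.toNat u v else PhiPowN φ (-z).toNat v u

end HnnPaper

/-!
Every step `w ⇝ v` cancels a pair `u u⁻¹` of letters in a word `∼`-equivalent to `w`. Track the
two cancelled letters through the semicommutations that lead back to a given word: a
semicommutation only swaps a letter of `H` with a neighbouring `t^{±1}`, so between the two tracked
letters there only ever stand letters `t^{±1}`, and a semicommutation that does not touch them acts
on the cancelled word as well. Hence if `w ∼ w''`, then the result of the cancellation is `∼` to a
word obtained from `w''` by erasing two letters, and erasing letters keeps a word over `V_H`.
-/

def HLetter.IsGen {X : Type*} (l : HLetter X) : Prop :=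
  ∃ u, l = .gen u

namespace HnnPaper

variable {X : Type*} {UA UB : Set (FreeGroup X)}
  {φ : ↥(Subgroup.closure UA) ≃* ↥(Subgroup.closure UB)}

section Semicommutation

variable (φ) in
def SemiSwap (x y x' y' : HLetter X) : Prop :=
  ∃ a : ↥(Subgroup.closure UA), (a : FreeGroup X) ∈ UA ∪ UA⁻¹ ∧
    ((x = HLetter.gen ↑a ∧ y = HLetter.t ∧ x' = HLetter.t ∧ y' = HLetter.gen ↑(φ a)) ∨
     (x = HLetter.t ∧ y = HLetter.gen ↑(φ a) ∧ x' = HLetter.gen ↑a ∧ y' = HLetter.t) ∨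
     (x = HLetter.tinv ∧ y = HLetter.gen ↑a ∧ x' = HLetter.gen ↑(φ a) ∧ y' = HLetter.tinv) ∨
     (x = HLetter.gen ↑(φ a) ∧ y = HLetter.tinv ∧ x' = HLetter.tinv ∧ y' = HLetter.gen ↑a))

lemma SemiSwap.isGen_or_isGen {x y x' y' : HLetter X} (h : SemiSwap φ x y x' y') :
    (x.IsGen ∧ ¬ y.IsGen ∧ x' = y ∧ y'.IsGen) ∨ (¬ x.IsGen ∧ y.IsGen ∧ x'.IsGen ∧ y' = x) := by
  obtain ⟨a, -, h | h | h | h⟩ := h <;> obtain ⟨rfl, rfl, rfl, rfl⟩ := h <;>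
    simp [HLetter.IsGen]

variable (φ) in
inductive SemiStep : List (HLetter X) → List (HLetter X) → Prop
  | swap {x y x' y' : HLetter X} (s : List (HLetter X)) :
      SemiSwap φ x y x' y' → SemiStep (x :: y :: s) (x' :: y' :: s)
  | cons (c : HLetter X) {w w' : List (HLetter X)} : SemiStep w w' → SemiStep (c :: w) (c :: w')

lemma SemiStep.append_left (p : List (HLetter X)) {w w' : List (HLetter X)}
    (h : SemiStep φ w w') : SemiStep φ (p ++ w) (p ++ w') := by
  induction p with
  | nil => exact h
  | cons c p ih => exact ih.cons c

lemma elemSemi_iff_semiStep {w w' : List (HLetter X)} : ElemSemi φ w w' ↔ SemiStep φ w w' := by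
  constructor
  · rintro ⟨p, s, a, ha, h⟩
    rcases h with ⟨rfl, rfl⟩ | ⟨rfl, rfl⟩ | ⟨rfl, rfl⟩ | ⟨rfl, rfl⟩ <;>
      simp only [List.append_assoc, List.cons_append, List.nil_append] <;>
      exact (SemiStep.swap s ⟨a, ha, by simp⟩).append_left p
  · intro h
    induction h with
    | swap s hxy =>
      obtain ⟨a, ha, h⟩ := hxy
      exact ⟨[], s, a, ha, by
        rcases h with ⟨rfl, rfl, rfl, rfl⟩ | ⟨rfl, rfl, rfl, rfl⟩ | ⟨rfl, rfl, rfl, rfl⟩ |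
          ⟨rfl, rfl, rfl, rfl⟩ <;> simp⟩
    | cons c _ ih =>
      obtain ⟨p, s, a, ha, h⟩ := ih
      exact ⟨c :: p, s, a, ha, by
        rcases h with ⟨rfl, rfl⟩ | ⟨rfl, rfl⟩ | ⟨rfl, rfl⟩ | ⟨rfl, rfl⟩ <;> simp⟩

lemma sim_iff_reflTransGen {w w' : List (HLetter X)} :
    Sim φ w w' ↔ Relation.ReflTransGen (SemiStep φ) w w' := by
  constructor <;> apply Relation.ReflTransGen.mono _
  exacts [fun _ _ => elemSemi_iff_semiStep.mp, fun _ _ => elemSemi_iff_semiStep.mpr]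

lemma ElemSemi.symm {w w' : List (HLetter X)} (h : ElemSemi φ w w') : ElemSemi φ w' w := by
  obtain ⟨p, s, a, ha, h⟩ := h
  exact ⟨p, s, a, ha, by tauto⟩

lemma Sim.symm {w w' : List (HLetter X)} (h : Sim φ w w') : Sim φ w' w := by
  induction h with
  | refl => exact .refl
  | tail _ hstep ih => exact .head hstep.symm ih

end Semicommutation

section Erasure

inductive EraseFirstGen : List (HLetter X) → List (HLetter X) → Prop
  | gen (u : FreeGroup X) (s : List (HLetter X)) : EraseFirstGen (HLetter.gen u :: s) s
  | cons {l : HLetter X} {w v : List (HLetter X)} :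
      ¬ l.IsGen → EraseFirstGen w v → EraseFirstGen (l :: w) (l :: v)

/-- `v` arises from `w` by erasing a letter of `H` together with the next letter of `H`. -/
inductive EraseGenPair : List (HLetter X) → List (HLetter X) → Prop
  | gen (u : FreeGroup X) {w v : List (HLetter X)} :
      EraseFirstGen w v → EraseGenPair (HLetter.gen u :: w) v
  | cons (l : HLetter X) {w v : List (HLetter X)} :
      EraseGenPair w v → EraseGenPair (l :: w) (l :: v)

lemma EraseFirstGen.sublist {w v : List (HLetter X)} (h : EraseFirstGen w v) : v.Sublist w := by
  induction h with
  | gen u s => exact List.sublist_cons_self _ s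
  | cons _ _ ih => exact ih.cons_cons _

lemma EraseGenPair.sublist {w v : List (HLetter X)} (h : EraseGenPair w v) : v.Sublist w := by
  induction h with
  | gen u h => exact h.sublist.cons _
  | cons _ _ ih => exact ih.cons_cons _

lemma EraseGenPair.append_left (p : List (HLetter X)) {w v : List (HLetter X)}
    (h : EraseGenPair w v) : EraseGenPair (p ++ w) (p ++ v) := by
  induction p with
  | nil => exact h
  | cons c p ih => exact ih.cons c

lemma reflTransGen_semiStep_cons (c : HLetter X) {v v' : List (HLetter X)}
    (h : Relation.ReflTransGen (SemiStep φ) v v') :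
    Relation.ReflTransGen (SemiStep φ) (c :: v) (c :: v') :=
  h.lift (c :: ·) fun _ _ => SemiStep.cons c

lemma EraseFirstGen.exists_of_semiStep {w w' v : List (HLetter X)} (he : EraseFirstGen w v)
    (hs : SemiStep φ w w') :
    ∃ v', EraseFirstGen w' v' ∧ Relation.ReflTransGen (SemiStep φ) v v' := by
  induction hs generalizing v with
  | swap s hxy =>
    rcases hxy.isGen_or_isGen with ⟨hx, hy, rfl, ⟨u', rfl⟩⟩ | ⟨hx, hy, ⟨u', rfl⟩, rfl⟩
    · cases he with
      | gen u => exact ⟨_, .cons hy (.gen u' s), .refl⟩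
      | cons hx' _ => exact absurd hx hx'
    · cases he with
      | gen u => exact absurd ⟨u, rfl⟩ hx
      | cons _ he =>
        cases he with
        | gen => exact ⟨_, .gen u' _, .refl⟩
        | cons hy' _ => exact absurd hy hy'
  | cons c hs ih =>
    cases he with
    | gen u => exact ⟨_, .gen u _, .single hs⟩
    | cons hc he =>
      obtain ⟨v', he', hv⟩ := ih he
      exact ⟨_, .cons hc he', reflTransGen_semiStep_cons c hv⟩

lemma EraseGenPair.exists_of_semiStep {w w' v : List (HLetter X)} (he : EraseGenPair w v)
    (hs : SemiStep φ w w') :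
    ∃ v', EraseGenPair w' v' ∧ Relation.ReflTransGen (SemiStep φ) v v' := by
  induction hs generalizing v with
  | swap s hxy =>
    rcases hxy.isGen_or_isGen with ⟨hx, hy, rfl, ⟨u', rfl⟩⟩ | ⟨hx, hy, ⟨u', rfl⟩, rfl⟩
    · cases he with
      | gen u he =>
        cases he with
        | gen => exact absurd ⟨_, rfl⟩ hy
        | cons _ he => exact ⟨_, .cons _ (.gen u' he), .refl⟩
      | cons _ he =>
        cases he with
        | gen u => exact absurd ⟨_, rfl⟩ hy
        | cons _ he => exact ⟨_, .cons _ (.cons _ he), .single (.swap _ hxy)⟩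
    · cases he with
      | gen u => exact absurd ⟨u, rfl⟩ hx
      | cons _ he =>
        cases he with
        | gen _ he => exact ⟨_, .gen u' (.cons hx he), .refl⟩
        | cons _ he => exact ⟨_, .cons _ (.cons _ he), .single (.swap _ hxy)⟩
  | cons c hs ih =>
    cases he with
    | gen u he =>
      obtain ⟨v', he', hv⟩ := he.exists_of_semiStep hs
      exact ⟨v', .gen u he', hv⟩
    | cons _ he =>
      obtain ⟨v', he', hv⟩ := ih he
      exact ⟨_, .cons c he', reflTransGen_semiStep_cons c hv⟩

lemma EraseGenPair.exists_of_sim {w w' v : List (HLetter X)} (he : EraseGenPair w v)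
    (hs : Sim φ w w') : ∃ v', EraseGenPair w' v' ∧ Sim φ v v' := by
  simp only [sim_iff_reflTransGen] at hs ⊢
  induction hs with
  | refl => exact ⟨v, he, .refl⟩
  | tail _ hstep ih =>
    obtain ⟨v', he', hv⟩ := ih
    obtain ⟨v'', he'', hv'⟩ := he'.exists_of_semiStep hstep
    exact ⟨v'', he'', hv.trans hv'⟩

end Erasure

section Cancellation

lemma tPow_zero : (tPow 0 : List (HLetter X)) = [] := by
  simp [tPow]

lemma tPow_natCast (n : ℕ) : (tPow n : List (HLetter X)) = List.replicate n HLetter.t := by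
  simp [tPow]

lemma tPow_neg_natCast (n : ℕ) :
    (tPow (-n) : List (HLetter X)) = List.replicate n HLetter.tinv := by
  rcases n with _ | n
  · simp [tPow]
  · simp [tPow]
    omega

/-- An HNN reduced word contains neither `t u u⁻¹ t⁻¹` nor `t⁻¹ u u⁻¹ t`, so the runs of `t`'s
around `u u⁻¹` have the same sign. -/
lemma tPow_add_of_hnnReducedWord {P S : List (HLetter X)} {a b : ℤ} {u : FreeGroup X}
    (hred : HNNReducedWord UA UB
      (P ++ tPow a ++ HLetter.gen u :: HLetter.gen u⁻¹ :: (tPow b ++ S))) :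
    (tPow (a + b) : List (HLetter X)) = tPow a ++ tPow b := by
  have hpinch : evalH [HLetter.gen u, HLetter.gen u⁻¹] = 1 := by simp [evalH]
  have hgen : IsGenOnly [HLetter.gen u, HLetter.gen u⁻¹] := by simp [IsGenOnly]
  obtain ⟨n, rfl | rfl⟩ := Int.eq_nat_or_neg a <;> obtain ⟨m, rfl | rfl⟩ := Int.eq_nat_or_neg b
  · rw [← Nat.cast_add, tPow_natCast, tPow_natCast, tPow_natCast, List.replicate_add]
  · rcases n.eq_zero_or_eq_succ_pred with rfl | hn
    · simp [tPow]
    rcases m.eq_zero_or_eq_succ_pred with rfl | hm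
    · simp [tPow]
    refine absurd (hpinch ▸ one_mem _) (hred.2 (P ++ List.replicate n.pred HLetter.t) _
      (List.replicate m.pred HLetter.tinv ++ S) ?_ hgen)
    rw [tPow_natCast, tPow_neg_natCast, hn, hm, List.replicate_succ', List.replicate_succ]
    simp
  · rcases n.eq_zero_or_eq_succ_pred with rfl | hn
    · simp [tPow]
    rcases m.eq_zero_or_eq_succ_pred with rfl | hm
    · simp [tPow]
    refine absurd (hpinch ▸ one_mem _) (hred.1 (P ++ List.replicate n.pred HLetter.tinv) _
      (List.replicate m.pred HLetter.t ++ S) ?_ hgen)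
    rw [tPow_natCast, tPow_neg_natCast, hn, hm, List.replicate_succ', List.replicate_succ]
    simp
  · rw [← neg_add, ← Nat.cast_add, tPow_neg_natCast, tPow_neg_natCast, tPow_neg_natCast,
      List.replicate_add]

lemma eraseGenPair_of_hnnReducedWord {P S : List (HLetter X)} {a b : ℤ} {u : FreeGroup X}
    (hred : HNNReducedWord UA UB
      (P ++ tPow a ++ HLetter.gen u :: HLetter.gen u⁻¹ :: (tPow b ++ S))) :
    EraseGenPair (P ++ tPow a ++ HLetter.gen u :: HLetter.gen u⁻¹ :: (tPow b ++ S))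
      (P ++ tPow (a + b) ++ S) := by
  rw [tPow_add_of_hnnReducedWord hred, List.append_assoc, List.append_assoc, List.append_assoc]
  exact .append_left _ (.append_left _ (.gen u (.gen _ _)))

lemma CancelAt.eraseGenPair {m : ℕ} {w v : List (HLetter X)} (h : CancelAt m w v)
    (hred : HNNReducedWord UA UB w) : EraseGenPair w v := by
  obtain ⟨n0, pre, post, u, n', -, rfl, ⟨rfl, rfl⟩ | ⟨pre', u', nl, rfl, rfl⟩⟩ := h
  all_goals
    simp only [blockWord, List.flatMap_append, List.flatMap_cons, tPow_zero,
      List.append_assoc, List.cons_append, List.nil_append] at hred ⊢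
  · exact eraseGenPair_of_hnnReducedWord (P := []) hred
  · have := eraseGenPair_of_hnnReducedWord
      (P := tPow n0 ++ pre'.flatMap (fun p => HLetter.gen p.1 :: tPow p.2) ++ [HLetter.gen u'])
      (by simpa only [List.append_assoc, List.cons_append, List.nil_append] using hred)
    simpa only [List.append_assoc, List.cons_append, List.nil_append] using this

end Cancellation

lemma Rsa.exists_wordOver_sim {S : Set (FreeGroup X)} {w v : List (HLetter X)} (h : Rsa φ w v)
    (hw : ∃ w', WordOver S w' ∧ Sim φ w w') : ∃ v', WordOver S v' ∧ Sim φ v v' := by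
  obtain ⟨m, w₁, v₁, hw₁, -, hww₁, hcancel, hv₁v⟩ := h
  obtain ⟨w', hw'S, hww'⟩ := hw
  obtain ⟨v', he, hv₁v'⟩ := (hcancel.eraseGenPair hw₁).exists_of_sim (hww₁.symm.trans hww')
  exact ⟨v', fun l hl => hw'S l (he.sublist.subset hl), hv₁v.symm.trans hv₁v'⟩

end HnnPaper

open HnnPaper

theorem statement_11_general
    (X : Type*)
    (UA UB : Set (FreeGroup X))
    (φ : ↥(Subgroup.closure UA) ≃* ↥(Subgroup.closure UB))
    (VH : Set (FreeGroup X))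
    (v1 vk : List (HLetter X))
    (hv1 : WordOver VH v1)
    (h : Succsim φ v1 vk) :
    ∃ vk' : List (HLetter X), WordOver VH vk' ∧ Sim φ vk vk' := by
  rcases h with hsim | hchain
  · exact ⟨v1, hv1, hsim.symm⟩
  · induction hchain with
    | single hstep => exact hstep.exists_wordOver_sim ⟨v1, hv1, .refl⟩
    | tail _ hstep ih => exact hstep.exists_wordOver_sim ih

theorem statement_11
    (X : Type*) [Finite X]
    (UH UA UB : Set (FreeGroup X))
    (hUH : IsFreeBasis UH) (hUAH : UA ⊆ UH) (hUBH : UB ⊆ UH)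
    (φ : ↥(Subgroup.closure UA) ≃* ↥(Subgroup.closure UB))
    (hφ : ∀ a : ↥(Subgroup.closure UA), (a : FreeGroup X) ∈ UA ∪ UA⁻¹ ↔
      ((φ a : ↥(Subgroup.closure UB)) : FreeGroup X) ∈ UB ∪ UB⁻¹)
    (VH : Set (FreeGroup X)) (hVH : VH ⊆ UH ∪ UH⁻¹)
    (v1 vk : List (HLetter X))
    (hv1 : WordOver VH v1) (hv1red : HNNReducedWord UA UB v1)
    (hvk : WordOver (UH ∪ UH⁻¹) vk) (hvkred : HNNReducedWord UA UB vk)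
    (h : Succsim φ v1 vk) :
    ∃ vk' : List (HLetter X), WordOver VH vk' ∧ Sim φ vk vk' :=
  statement_11_general X UA UB φ VH v1 vk hv1 h
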